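/- Let F be a field of characteristic 2 and let L be a nilpotent symplectic alternating algebra of dimension 10 over F whose centre Z(L) is isotropic of dimension 4, with L³ = Z(L), of type C. Then L cannot have both a presentation of the form 𝒫₁₀^{(4,4)}(0,β) and a presentation of the form 𝒫₁₀^{(4,4)}(α,γ) with α ≠ 0, where t² + β and t² + αt + γ are irreducible polynomials in F[t]. -/

import Mathlib

universe u

/-- A symplectic alternating algebra (SAA) over a field `F`: a vector space with a
nondegenerate alternating bilinear form and an alternating bilinear product
satisfying `(x·y, z) = (y·z, x)`. -/
structure SAA (F : Type u) [Field F] : Type (u + 1) where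
  carrier : Type u
  [isAddCommGroup : AddCommGroup carrier]
  [isModule : Module F carrier]
  form : carrier →ₗ[F] carrier →ₗ[F] F
  mul : carrier →ₗ[F] carrier →ₗ[F] carrier
  form_alt : ∀ x, form x x = 0
  form_nondeg : ∀ x, (∀ y, form x y = 0) → x = 0
  mul_alt : ∀ x, mul x x = 0
  form_symm : ∀ x y z, form (mul x y) z = form (mul y z) x

attribute [instance] SAA.isAddCommGroup SAA.isModule

namespace SAA

variable {F : Type u} [Field F]

/-- The span of all products `u·v` with `u ∈ U`, `v ∈ V`. -/
def prodSpace (L : SAA F) (U V : Submodule F L.carrier) : Submodule F L.carrier :=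
  Submodule.span F {w | ∃ u ∈ U, ∃ v ∈ V, L.mul u v = w}

/-- Powers of the algebra: `L¹ = L`, `L^{k+1} = span {u·v : u ∈ L^k, v ∈ L}`. -/
def pow (L : SAA F) : ℕ → Submodule F L.carrier
  | 0 => ⊤
  | 1 => ⊤
  | n + 2 => L.prodSpace (L.pow (n + 1)) ⊤

/-- The centre `Z(L) = {x : x·y = 0 for all y}`. -/
def centre (L : SAA F) : Submodule F L.carrier where
  carrier := {x | ∀ y, L.mul x y = 0}
  add_mem' := by
    intro a b ha hb
    intro y
    rw [map_add, LinearMap.add_apply, ha y, hb y, add_zero]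
  zero_mem' := by
    intro y
    rw [map_zero, LinearMap.zero_apply]
  smul_mem' := by
    intro c a ha
    intro y
    rw [map_smul, LinearMap.smul_apply, ha y, smul_zero]

/-- `{x : x·a ∈ B for all a ∈ A}`. -/
def transporter (L : SAA F) (A B : Submodule F L.carrier) : Submodule F L.carrier where
  carrier := {x | ∀ a ∈ A, L.mul x a ∈ B}
  add_mem' := by
    intro u v hu hv a ha
    rw [map_add, LinearMap.add_apply]
    exact B.add_mem (hu a ha) (hv a ha)
  zero_mem' := by
    intro a ha
    rw [map_zero, LinearMap.zero_apply]
    exact B.zero_mem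
  smul_mem' := by
    intro c u hu a ha
    rw [map_smul, LinearMap.smul_apply]
    exact B.smul_mem c (hu a ha)

/-- `L` is nilpotent if some power vanishes. -/
def IsNilpotentAlg (L : SAA F) : Prop := ∃ n, L.pow n = ⊥

/-- `L` is nilpotent of class `k` if `L^{k+1} = 0` and `L^k ≠ 0`. -/
def IsClass (L : SAA F) (k : ℕ) : Prop := L.pow (k + 1) = ⊥ ∧ L.pow k ≠ ⊥

/-- A subspace is isotropic if the form vanishes identically on it. -/
def IsIsotropic (L : SAA F) (U : Submodule F L.carrier) : Prop :=
  ∀ u ∈ U, ∀ v ∈ U, L.form u v = 0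

/-- A standard basis `x₁,y₁,…,x₅,y₅` (indexed by `Fin 5 ⊕ Fin 5`, with `Sum.inl i` the
vector `x_{i+1}` and `Sum.inr i` the vector `y_{i+1}`): a basis with
`(xᵢ,xⱼ) = (yᵢ,yⱼ) = 0` and `(xᵢ,yⱼ) = δᵢⱼ`. -/
def IsStandardBasis (L : SAA F) (b : Fin 5 ⊕ Fin 5 → L.carrier) : Prop :=
  LinearIndependent F b ∧ Submodule.span F (Set.range b) = ⊤ ∧
    (∀ i j, L.form (b (Sum.inl i)) (b (Sum.inl j)) = 0) ∧
    (∀ i j, L.form (b (Sum.inr i)) (b (Sum.inr j)) = 0) ∧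
    (∀ i j : Fin 5, L.form (b (Sum.inl i)) (b (Sum.inr j)) = if i = j then 1 else 0)

/-- A presentation: a list of triples of basis indices together with the prescribed
value of the triple form on them. -/
abbrev Pres (F : Type u) : Type u :=
  List ((Fin 5 ⊕ Fin 5) × (Fin 5 ⊕ Fin 5) × (Fin 5 ⊕ Fin 5) × F)

/-- The alternating trilinear form `T(u,v,w) = (u·v, w)`. -/
def triple (L : SAA F) (u v w : L.carrier) : F := L.form (L.mul u v) w

/-- The index of the basis vector `x_{i+1}`. -/
def xi (i : Fin 5) : Fin 5 ⊕ Fin 5 := Sum.inl i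

/-- The index of the basis vector `y_{i+1}`. -/
def yi (i : Fin 5) : Fin 5 ⊕ Fin 5 := Sum.inr i

/-- `b` is a standard basis realizing the presentation `P`: the triple form takes the
listed values on the listed triples of basis vectors and vanishes on every triple of
basis vectors which is not a permutation of a listed triple. -/
def IsPresBasis (L : SAA F) (b : Fin 5 ⊕ Fin 5 → L.carrier) (P : Pres F) : Prop :=
  L.IsStandardBasis b ∧
    (∀ e ∈ P, L.triple (b e.1) (b e.2.1) (b e.2.2.1) = e.2.2.2) ∧
    (∀ i j k : Fin 5 ⊕ Fin 5,
      (∀ e ∈ P, ({i, j, k} : Multiset (Fin 5 ⊕ Fin 5)) ≠ {e.1, e.2.1, e.2.2.1}) →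
      L.triple (b i) (b j) (b k) = 0)

/-- `L` has the presentation `P` (with respect to some standard basis). -/
def HasPres (L : SAA F) (P : Pres F) : Prop := ∃ b, L.IsPresBasis b P

/-- Isomorphism of symplectic alternating algebras: a linear equivalence preserving
the form and the product. -/
def Iso (L M : SAA F) : Prop :=
  ∃ e : L.carrier ≃ₗ[F] M.carrier,
    (∀ u v, M.form (e u) (e v) = L.form u v) ∧
    (∀ u v, e (L.mul u v) = M.mul (e u) (e v))

/-- The alternating form `φ_z̄` induced on `L/L²` by `z ∈ L²` (given by
`φ_z̄(ū,v̄) = (z·u, v)`) is degenerate: some `u ∉ L²` lies in its radical. -/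
def PhiDegen (L : SAA F) (z : L.carrier) : Prop :=
  ∃ u, u ∉ L.pow 2 ∧ ∀ v, L.form (L.mul z u) v = 0

/-- Type A: there is a basis `z̄, t̄` of `L²/Z(L)` with both `φ_z̄` and `φ_t̄` degenerate. -/
def TypeA (L : SAA F) : Prop :=
  ∃ z t, z ∈ L.pow 2 ∧ t ∈ L.pow 2 ∧
    (∀ a b : F, a • z + b • t ∈ L.centre → a = 0 ∧ b = 0) ∧
    Submodule.span F {z, t} ⊔ L.centre = L.pow 2 ∧
    L.PhiDegen z ∧ L.PhiDegen t

/-- Type B: there is `0 ≠ z̄ ∈ L²/Z(L)` with `φ_z̄` degenerate, while `φ_t̄` is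
nondegenerate for every `t̄ ∉ F z̄`. -/
def TypeB (L : SAA F) : Prop :=
  ∃ z, z ∈ L.pow 2 ∧ z ∉ L.centre ∧ L.PhiDegen z ∧
    ∀ t ∈ L.pow 2, (¬∃ a : F, t - a • z ∈ L.centre) → ¬L.PhiDegen t

/-- Type C: `φ_z̄` is nondegenerate for every `0 ≠ z̄ ∈ L²/Z(L)`. -/
def TypeC (L : SAA F) : Prop :=
  ∀ z ∈ L.pow 2, z ∉ L.centre → ¬L.PhiDegen z

/-- `L` is a nilpotent SAA of dimension 10 whose centre is isotropic of dimension 4. -/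
def Cond4 (L : SAA F) : Prop :=
  L.IsNilpotentAlg ∧ Module.finrank F L.carrier = 10 ∧
    L.IsIsotropic L.centre ∧ Module.finrank F ↥L.centre = 4

/-- `L` is a nilpotent SAA of dimension 10, centre isotropic of dimension 4,
`L³ = Z(L)`, of type C. -/
def Cond4C (L : SAA F) : Prop := Cond4 L ∧ L.pow 3 = L.centre ∧ L.TypeC

/-- `L` is a SAA of dimension 10 with isotropic centre of dimension 2, nilpotent of
class `k`. -/
def Cond2 (L : SAA F) (k : ℕ) : Prop :=
  Module.finrank F L.carrier = 10 ∧ L.IsIsotropic L.centre ∧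
    Module.finrank F ↥L.centre = 2 ∧ L.IsClass k

/-- The characteristic subspace `U = {x ∈ L⁴ : x·L³ ⊆ L⁵·L²}`. -/
def Usub (L : SAA F) : Submodule F L.carrier :=
  L.pow 4 ⊓ L.transporter (L.pow 3) (L.prodSpace (L.pow 5) (L.pow 2))

end SAA

namespace SAA

variable (F : Type u) [Field F]

/-- Presentation `𝒫₁₀^{(4,1)}`: `(y₂y₃,y₄)=1, (y₁y₄,y₅)=1, (x₁y₃,y₅)=1`. -/
def P41 : Pres F := [(yi 1, yi 2, yi 3, 1), (yi 0, yi 3, yi 4, 1), (xi 0, yi 2, yi 4, 1)]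

/-- Presentation `𝒫₁₀^{(4,2)}`: `(x₁y₂,y₃)=1, (y₁y₄,y₅)=1`. -/
def P42 : Pres F := [(xi 0, yi 1, yi 2, 1), (yi 0, yi 3, yi 4, 1)]

/-- Presentation `𝒫₁₀^{(4,3)}`: `(x₁y₂,y₃)=1, (y₁y₂,y₄)=1, (y₁y₃,y₅)=1`. -/
def P43 : Pres F := [(xi 0, yi 1, yi 2, 1), (yi 0, yi 1, yi 3, 1), (yi 0, yi 2, yi 4, 1)]

/-- Presentation `𝒫₁₀^{(4,4)}(α,β)`:
`(x₁y₂,y₃)=1, (x₁y₃,y₄)=α, (x₁y₄,y₅)=β, (y₁y₂,y₅)=1, (y₁y₃,y₄)=1`. -/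
def P44 (α β : F) : Pres F :=
  [(xi 0, yi 1, yi 2, 1), (xi 0, yi 2, yi 3, α), (xi 0, yi 3, yi 4, β),
   (yi 0, yi 1, yi 4, 1), (yi 0, yi 2, yi 3, 1)]

/-- Presentation `𝒫(β)`: `(x₁y₂,y₃)=1, (x₁y₄,y₅)=β, (y₁y₂,y₅)=1, (y₁y₃,y₄)=1`. -/
def Pbeta (β : F) : Pres F :=
  [(xi 0, yi 1, yi 2, 1), (xi 0, yi 3, yi 4, β), (yi 0, yi 1, yi 4, 1), (yi 0, yi 2, yi 3, 1)]

/-- Presentation `𝒫₁₀^{(2,1)}`: `(x₃y₄,y₅)=1, (x₂y₃,y₅)=1, (x₁y₃,y₄)=1, (y₁y₂,y₅)=1`. -/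
def P21 : Pres F :=
  [(xi 2, yi 3, yi 4, 1), (xi 1, yi 2, yi 4, 1), (xi 0, yi 2, yi 3, 1), (yi 0, yi 1, yi 4, 1)]

/-- Presentation `𝒫₁₀^{(2,2)}(r)`: `(x₃y₄,y₅)=r, (x₂y₃,y₅)=1, (x₁y₃,y₄)=1, (y₁y₂,y₃)=1`. -/
def P22 (r : F) : Pres F :=
  [(xi 2, yi 3, yi 4, r), (xi 1, yi 2, yi 4, 1), (xi 0, yi 2, yi 3, 1), (yi 0, yi 1, yi 2, 1)]

/-- Presentation `𝒫₁₀^{(2,3)}`: `(x₃y₄,y₅)=1, (x₂y₃,y₅)=1, (x₁y₂,y₅)=1, (y₁y₂,y₄)=1`. -/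
def P23 : Pres F :=
  [(xi 2, yi 3, yi 4, 1), (xi 1, yi 2, yi 4, 1), (xi 0, yi 1, yi 4, 1), (yi 0, yi 1, yi 3, 1)]

/-- Presentation `𝒫₁₀^{(2,4)}(r)`:
`(x₃y₄,y₅)=r, (x₂y₃,y₅)=1, (x₁y₂,y₅)=1, (x₁y₃,y₄)=1, (y₁y₂,y₄)=1`. -/
def P24 (r : F) : Pres F :=
  [(xi 2, yi 3, yi 4, r), (xi 1, yi 2, yi 4, 1), (xi 0, yi 1, yi 4, 1),
   (xi 0, yi 2, yi 3, 1), (yi 0, yi 1, yi 3, 1)]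

/-- Presentation `𝒫₁₀^{(2,5)}(r)`: `(x₂y₃,y₅)=r, (x₃y₄,y₅)=1, (x₁y₂,y₅)=1, (y₁y₂,y₃)=1`. -/
def P25 (r : F) : Pres F :=
  [(xi 1, yi 2, yi 4, r), (xi 2, yi 3, yi 4, 1), (xi 0, yi 1, yi 4, 1), (yi 0, yi 1, yi 2, 1)]

/-- Presentation `𝒫₁₀^{(2,6)}(r)`:
`(x₂y₃,y₅)=r, (x₃y₄,y₅)=1, (x₁y₂,y₅)=1, (x₁y₃,y₄)=1, (y₁y₂,y₃)=1`. -/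
def P26 (r : F) : Pres F :=
  [(xi 1, yi 2, yi 4, r), (xi 2, yi 3, yi 4, 1), (xi 0, yi 1, yi 4, 1),
   (xi 0, yi 2, yi 3, 1), (yi 0, yi 1, yi 2, 1)]

/-- Presentation `𝒫₁₀^{(2,7)}`: `(x₂y₃,y₅)=1, (x₃y₄,y₅)=1, (x₁y₂,y₄)=1, (y₁y₂,y₃)=1`. -/
def P27 : Pres F :=
  [(xi 1, yi 2, yi 4, 1), (xi 2, yi 3, yi 4, 1), (xi 0, yi 1, yi 3, 1), (yi 0, yi 1, yi 2, 1)]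

end SAA

/-!
For `z ∈ L²` consider the alternating forms `φ_z(u, v) = (z·u, v)` on `L`. In a presentation
`𝒫₁₀^{(4,4)}(α,β)` with standard basis `x₁, y₁, …, x₅, y₅`, no listed triple involves
`x₂, …, x₅`, so every `φ_z` with `z ∈ L²` is a combination `s φ_{x₁} + t φ_{y₁}`, and on
`y₂, …, y₅` the Pfaffian of this pencil is `βs² + αst + t²`. Its polarization `pfaffPolar`,
evaluated at `φ_{x₁}, φ_{y₁}` and `y₂, y₃, y₄, y₅`, is `α`. In characteristic `2` the diagonal
of the polarization vanishes, so for `α = 0` the polarization vanishes on all pairs `φ_z, φ_w`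
with `z, w ∈ L²` and all arguments. The vectors `x₁ = y₂·y₅` and `y₁ = y₃·y₂` of a second
presentation `𝒫₁₀^{(4,4)}(α,γ)` lie in `L²`, which forces `α = 0`.
-/

namespace SAA

section Pfaffian

variable {R M : Type*} [CommRing R] [AddCommGroup M] [Module R M]

/-- The polarization of the Pfaffian of the alternating matrix `(φ uᵢ uⱼ)`:
`pfaffPolar φ φ` is twice that Pfaffian. -/
def pfaffPolar (φ ψ : LinearMap.BilinForm R M) (u₁ u₂ u₃ u₄ : M) : R :=
  φ u₁ u₂ * ψ u₃ u₄ - φ u₁ u₃ * ψ u₂ u₄ + φ u₁ u₄ * ψ u₂ u₃ +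
    ψ u₁ u₂ * φ u₃ u₄ - ψ u₁ u₃ * φ u₂ u₄ + ψ u₁ u₄ * φ u₂ u₃

theorem pfaffPolar_self_eq_zero_of_two_eq_zero (h2 : (2 : R) = 0) (φ : LinearMap.BilinForm R M)
    (u₁ u₂ u₃ u₄ : M) : pfaffPolar φ φ u₁ u₂ u₃ u₄ = 0 := by
  unfold pfaffPolar
  linear_combination (φ u₁ u₂ * φ u₃ u₄ - φ u₁ u₃ * φ u₂ u₄ + φ u₁ u₄ * φ u₂ u₃) * h2

theorem pfaffPolar_smul_add_smul (φ ψ : LinearMap.BilinForm R M) (a d a' d' : R)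
    (u₁ u₂ u₃ u₄ : M) :
    pfaffPolar (a • φ + d • ψ) (a' • φ + d' • ψ) u₁ u₂ u₃ u₄ =
      a * a' * pfaffPolar φ φ u₁ u₂ u₃ u₄ + (a * d' + d * a') * pfaffPolar φ ψ u₁ u₂ u₃ u₄ +
        d * d' * pfaffPolar ψ ψ u₁ u₂ u₃ u₄ := by
  simp only [pfaffPolar, LinearMap.add_apply, LinearMap.smul_apply, smul_eq_mul]
  ring

end Pfaffian

variable {F : Type u} [Field F]

section Triple

variable (L : SAA F)

/-- `φ_z(u, v) = (z·u, v)`: the form `φ_z̄` of the paper before passing to `L/L²`. -/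
def phi : L.carrier →ₗ[F] LinearMap.BilinForm F L.carrier := L.mul.compr₂ L.form

theorem phi_apply (z u v : L.carrier) : L.phi z u v = L.triple z u v := rfl

theorem phi_isAlt (z : L.carrier) : LinearMap.IsAlt (L.phi z) := fun u => by
  rw [phi_apply, triple, L.form_symm, L.mul_alt, map_zero, LinearMap.zero_apply]

theorem triple_rotate (u v w : L.carrier) : L.triple u v w = L.triple v w u :=
  L.form_symm u v w

theorem triple_swap (z u v : L.carrier) : L.triple z v u = -L.triple z u v :=
  ((L.phi_isAlt z).neg u v).symm

theorem mul_mem_pow_two (u v : L.carrier) : L.mul u v ∈ L.pow 2 :=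
  Submodule.subset_span ⟨u, trivial, v, trivial, rfl⟩

theorem form_eq_zero_of_phi_eq_zero {w z : L.carrier} (hw : L.phi w = 0) (hz : z ∈ L.pow 2) :
    L.form w z = 0 := by
  refine Submodule.span_induction ?_ (by simp) (fun _ _ _ _ h₁ h₂ => by simp [h₁, h₂])
    (fun c _ _ h => by simp [h]) hz
  rintro _ ⟨u, -, v, -, rfl⟩
  rw [← LinearMap.IsAlt.neg L.form_alt]
  change -L.triple u v w = 0
  rw [triple_rotate, triple_rotate, ← phi_apply, hw, LinearMap.zero_apply, LinearMap.zero_apply,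
    neg_zero]

end Triple

namespace IsStandardBasis

variable {L : SAA F} {b : Fin 5 ⊕ Fin 5 → L.carrier} (hb : L.IsStandardBasis b)
include hb

noncomputable def basis : Module.Basis (Fin 5 ⊕ Fin 5) F L.carrier :=
  Module.Basis.mk hb.1 hb.2.1.ge

theorem coe_basis : ⇑hb.basis = b := Module.Basis.coe_mk _ _

theorem form_inl (i : Fin 5) (s : Fin 5 ⊕ Fin 5) :
    L.form (b (Sum.inl i)) (b s) = if s = Sum.inr i then 1 else 0 := by
  rcases s with j | j
  · simp [hb.2.2.1 i j]
  · simp [hb.2.2.2.2 i j, eq_comm]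

theorem form_inr (i : Fin 5) (s : Fin 5 ⊕ Fin 5) :
    L.form (b (Sum.inr i)) (b s) = if s = Sum.inl i then -1 else 0 := by
  rw [← LinearMap.IsAlt.neg L.form_alt]
  rcases s with j | j
  · simp [hb.2.2.2.2 j i, apply_ite]
  · simp [hb.2.2.2.1 j i]

theorem repr_inr (w : L.carrier) (i : Fin 5) :
    hb.basis.repr w (Sum.inr i) = L.form (b (Sum.inl i)) w := by
  conv_rhs => rw [← hb.basis.sum_repr w]
  simp [hb.coe_basis, hb.form_inl]

theorem ext_form {v w : L.carrier} (h : ∀ s, L.form v (b s) = L.form w (b s)) : v = w := by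
  have hvw : L.form v = L.form w := hb.basis.ext fun s => by rw [hb.coe_basis]; exact h s
  exact sub_eq_zero.1 (L.form_nondeg _ fun y => by simp [hvw])

end IsStandardBasis

/-- For a standard basis `(xᵢ, ·)` is the `yᵢ`-coordinate, so this is `yᵢ* ∧ yⱼ*`
(indices counted from `0`). -/
def coordWedge (L : SAA F) (b : Fin 5 ⊕ Fin 5 → L.carrier) (i j : Fin 5) :
    LinearMap.BilinForm F L.carrier :=
  (LinearMap.mul F F).compl₁₂ (L.form (b (Sum.inl i))) (L.form (b (Sum.inl j))) -
    (LinearMap.mul F F).compl₁₂ (L.form (b (Sum.inl j))) (L.form (b (Sum.inl i)))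

@[simp]
theorem coordWedge_apply (L : SAA F) (b : Fin 5 ⊕ Fin 5 → L.carrier) (i j : Fin 5)
    (u v : L.carrier) :
    L.coordWedge b i j u v =
      L.form (b (Sum.inl i)) u * L.form (b (Sum.inl j)) v -
        L.form (b (Sum.inl j)) u * L.form (b (Sum.inl i)) v := rfl

/-- The index multisets of the triples of `P44 F α β`; unlike `P44`, this list has no free
parameters, so membership in it is decidable by `decide`. -/
def P44Triples : List (Multiset (Fin 5 ⊕ Fin 5)) :=
  [{.inl 0, .inr 1, .inr 2}, {.inl 0, .inr 2, .inr 3}, {.inl 0, .inr 3, .inr 4},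
    {.inr 0, .inr 1, .inr 4}, {.inr 0, .inr 2, .inr 3}]

namespace IsPresBasis

variable {L : SAA F} {b : Fin 5 ⊕ Fin 5 → L.carrier} {α β : F}
  (hb : L.IsPresBasis b (P44 F α β))
include hb

theorem triple_eq_zero_of_P44 (p q r : Fin 5 ⊕ Fin 5) (h : {p, q, r} ∉ P44Triples) :
    L.triple (b p) (b q) (b r) = 0 :=
  hb.2.2 p q r fun e he heq => h <| by
    simp only [P44, xi, yi, List.mem_cons, List.not_mem_nil, or_false] at he
    rcases he with rfl | rfl | rfl | rfl | rfl <;> rw [heq] <;> dsimp only <;> decide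

theorem phi_inl_eq_zero {k : Fin 5} (hk : k ≠ 0) : L.phi (b (Sum.inl k)) = 0 := by
  refine LinearMap.BilinForm.ext_basis hb.1.basis fun p q => ?_
  rw [hb.1.coe_basis, phi_apply, LinearMap.zero_apply, LinearMap.zero_apply]
  refine hb.triple_eq_zero_of_P44 _ p q ?_
  revert k p q
  decide

theorem phi_eq_of_mem_pow_two {z : L.carrier} (hz : z ∈ L.pow 2) :
    L.phi z = hb.1.basis.repr z (Sum.inl 0) • L.phi (b (Sum.inl 0)) +
      hb.1.basis.repr z (Sum.inr 0) • L.phi (b (Sum.inr 0)) := by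
  have hcoord : ∀ k : Fin 5, k ≠ 0 → hb.1.basis.repr z (Sum.inr k) = 0 := fun k hk => by
    rw [hb.1.repr_inr]
    exact L.form_eq_zero_of_phi_eq_zero (hb.phi_inl_eq_zero hk) hz
  conv_lhs => rw [← hb.1.basis.sum_repr z]
  simp [Fintype.sum_sum_type, Fin.sum_univ_succ, hb.1.coe_basis, hb.phi_inl_eq_zero,
    hcoord]

theorem triple_x₁_y₂_y₃ : L.triple (b (Sum.inl 0)) (b (Sum.inr 1)) (b (Sum.inr 2)) = 1 :=
  hb.2.1 (xi 0, yi 1, yi 2, 1) (by simp [P44])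

theorem triple_x₁_y₃_y₄ : L.triple (b (Sum.inl 0)) (b (Sum.inr 2)) (b (Sum.inr 3)) = α :=
  hb.2.1 (xi 0, yi 2, yi 3, α) (by simp [P44])

theorem triple_x₁_y₄_y₅ : L.triple (b (Sum.inl 0)) (b (Sum.inr 3)) (b (Sum.inr 4)) = β :=
  hb.2.1 (xi 0, yi 3, yi 4, β) (by simp [P44])

theorem triple_y₁_y₂_y₅ : L.triple (b (Sum.inr 0)) (b (Sum.inr 1)) (b (Sum.inr 4)) = 1 :=
  hb.2.1 (yi 0, yi 1, yi 4, 1) (by simp [P44])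

theorem triple_y₁_y₃_y₄ : L.triple (b (Sum.inr 0)) (b (Sum.inr 2)) (b (Sum.inr 3)) = 1 :=
  hb.2.1 (yi 0, yi 2, yi 3, 1) (by simp [P44])

theorem phi_x₁ :
    L.phi (b (Sum.inl 0)) =
      L.coordWedge b 1 2 + α • L.coordWedge b 2 3 + β • L.coordWedge b 3 4 := by
  have h32 : L.triple (b (Sum.inl 0)) (b (Sum.inr 2)) (b (Sum.inr 1)) = -1 := by
    rw [triple_swap, hb.triple_x₁_y₂_y₃]
  have h43 : L.triple (b (Sum.inl 0)) (b (Sum.inr 3)) (b (Sum.inr 2)) = -α := by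
    rw [triple_swap, hb.triple_x₁_y₃_y₄]
  have h54 : L.triple (b (Sum.inl 0)) (b (Sum.inr 4)) (b (Sum.inr 3)) = -β := by
    rw [triple_swap, hb.triple_x₁_y₄_y₅]
  refine LinearMap.BilinForm.ext_basis hb.1.basis fun p q => ?_
  rw [hb.1.coe_basis]
  rcases p with p | p <;> rcases q with q | q <;> fin_cases p <;> fin_cases q <;>
    simp (config := { decide := true }) (disch := decide) only [Fin.reduceFinMk,
      LinearMap.add_apply, LinearMap.smul_apply, coordWedge_apply, hb.1.form_inl, h32, h43, h54,
      phi_apply, hb.triple_x₁_y₂_y₃, hb.triple_x₁_y₃_y₄, hb.triple_x₁_y₄_y₅,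
      hb.triple_eq_zero_of_P44, reduceIte, mul_zero, mul_one, mul_neg, sub_zero, zero_sub,
      sub_self, smul_eq_mul, add_zero, zero_add]

theorem phi_y₁ : L.phi (b (Sum.inr 0)) = L.coordWedge b 1 4 + L.coordWedge b 2 3 := by
  have h52 : L.triple (b (Sum.inr 0)) (b (Sum.inr 4)) (b (Sum.inr 1)) = -1 := by
    rw [triple_swap, hb.triple_y₁_y₂_y₅]
  have h43 : L.triple (b (Sum.inr 0)) (b (Sum.inr 3)) (b (Sum.inr 2)) = -1 := by
    rw [triple_swap, hb.triple_y₁_y₃_y₄]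
  refine LinearMap.BilinForm.ext_basis hb.1.basis fun p q => ?_
  rw [hb.1.coe_basis]
  rcases p with p | p <;> rcases q with q | q <;> fin_cases p <;> fin_cases q <;>
    simp (config := { decide := true }) (disch := decide) only [Fin.reduceFinMk,
      LinearMap.add_apply, coordWedge_apply, hb.1.form_inl, h52, h43, phi_apply,
      hb.triple_y₁_y₂_y₅, hb.triple_y₁_y₃_y₄, hb.triple_eq_zero_of_P44, reduceIte, mul_zero,
      mul_one, sub_zero, zero_sub, sub_self, add_zero, zero_add]

theorem mul_y₂_y₅ : L.mul (b (Sum.inr 1)) (b (Sum.inr 4)) = b (Sum.inl 0) := by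
  refine hb.1.ext_form fun s => ?_
  change L.triple _ _ _ = _
  rw [triple_rotate, triple_rotate, hb.1.form_inl]
  rcases s with k | k <;> fin_cases k <;>
    simp (config := { decide := true }) (disch := decide) only [Fin.reduceFinMk, reduceIte,
      hb.triple_y₁_y₂_y₅, hb.triple_eq_zero_of_P44]

theorem mul_y₃_y₂ : L.mul (b (Sum.inr 2)) (b (Sum.inr 1)) = b (Sum.inr 0) := by
  refine hb.1.ext_form fun s => ?_
  change L.triple _ _ _ = _
  rw [triple_rotate, triple_rotate, triple_swap, hb.1.form_inr]
  rcases s with k | k <;> fin_cases k <;>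
    simp (config := { decide := true }) (disch := decide) only [Fin.reduceFinMk, reduceIte,
      hb.triple_x₁_y₂_y₃, hb.triple_eq_zero_of_P44, neg_zero]

theorem pfaffPolar_phi_x₁_phi_y₁ :
    pfaffPolar (L.phi (b (Sum.inl 0))) (L.phi (b (Sum.inr 0)))
      (b (Sum.inr 1)) (b (Sum.inr 2)) (b (Sum.inr 3)) (b (Sum.inr 4)) = α := by
  simp (disch := decide) only [pfaffPolar, phi_apply, hb.triple_eq_zero_of_P44,
    hb.triple_x₁_y₂_y₃, hb.triple_x₁_y₃_y₄, hb.triple_x₁_y₄_y₅, hb.triple_y₁_y₂_y₅,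
    hb.triple_y₁_y₃_y₄]
  ring

end IsPresBasis

theorem IsPresBasis.pfaffPolar_phi_eq_zero_of_two_eq_zero {L : SAA F}
    {b : Fin 5 ⊕ Fin 5 → L.carrier} {β : F} (hb : L.IsPresBasis b (P44 F 0 β))
    (hchar : (2 : F) = 0) {z w : L.carrier} (hz : z ∈ L.pow 2) (hw : w ∈ L.pow 2)
    (u₁ u₂ u₃ u₄ : L.carrier) : pfaffPolar (L.phi z) (L.phi w) u₁ u₂ u₃ u₄ = 0 := by
  have hpencil : pfaffPolar (L.phi (b (Sum.inl 0))) (L.phi (b (Sum.inr 0))) u₁ u₂ u₃ u₄ = 0 := by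
    simp only [hb.phi_x₁, hb.phi_y₁, pfaffPolar, LinearMap.add_apply,
      LinearMap.smul_apply, coordWedge_apply, smul_eq_mul]
    ring
  rw [hb.phi_eq_of_mem_pow_two hz, hb.phi_eq_of_mem_pow_two hw, pfaffPolar_smul_add_smul,
    hpencil, pfaffPolar_self_eq_zero_of_two_eq_zero hchar,
    pfaffPolar_self_eq_zero_of_two_eq_zero hchar]
  ring

end SAA

theorem not_both_presentations_char_two_general
    {F : Type u} [Field F] (hchar : (2 : F) = 0) (L : SAA F) :
    ¬((∃ β : F, Irreducible (Polynomial.X ^ 2 + Polynomial.C β) ∧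
          L.HasPres (SAA.P44 F 0 β)) ∧
      (∃ α γ : F, α ≠ 0 ∧
          Irreducible (Polynomial.X ^ 2 + Polynomial.C α * Polynomial.X + Polynomial.C γ) ∧
          L.HasPres (SAA.P44 F α γ))) := by
  rintro ⟨⟨β, -, b, hb⟩, α, γ, hα, -, c, hc⟩
  have hx₁ : c (Sum.inl 0) ∈ L.pow 2 := hc.mul_y₂_y₅ ▸ L.mul_mem_pow_two _ _
  have hy₁ : c (Sum.inr 0) ∈ L.pow 2 := hc.mul_y₃_y₂ ▸ L.mul_mem_pow_two _ _
  apply hα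
  rw [← hc.pfaffPolar_phi_x₁_phi_y₁]
  exact hb.pfaffPolar_phi_eq_zero_of_two_eq_zero hchar hx₁ hy₁ _ _ _ _

/-- Lemma 2.9. Over a field of characteristic 2, a nilpotent SAA of
dimension 10 with isotropic centre of dimension 4, `L³ = Z(L)`, of type C cannot have
both a presentation `𝒫₁₀^{(4,4)}(0,β)` and a presentation `𝒫₁₀^{(4,4)}(α,γ)` with
`α ≠ 0`, where `t² + β` and `t² + αt + γ` are irreducible. -/
theorem not_both_presentations_char_two
    {F : Type u} [Field F] (hchar : (2 : F) = 0) (L : SAA F) (h : L.Cond4C) :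
    ¬((∃ β : F, Irreducible (Polynomial.X ^ 2 + Polynomial.C β) ∧
          L.HasPres (SAA.P44 F 0 β)) ∧
      (∃ α γ : F, α ≠ 0 ∧
          Irreducible (Polynomial.X ^ 2 + Polynomial.C α * Polynomial.X + Polynomial.C γ) ∧
          L.HasPres (SAA.P44 F α γ))) :=
  not_both_presentations_char_two_general hchar L
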